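/- Let G act faithfully by homeomorphisms on a Hausdorff space X, and let U be an open subset such that the G-orbit of U (the collection {gU : g ∈ G}) is a basis of the topology of X. Then every non-trivial normal subgroup of G contains R_U, the normal closure in G of the commutator subgroup of G_(U). -/

import Mathlib

/-!
Pick `h ≠ 1` in `N` and a point `x` that `h` moves. By Hausdorffness and since the translates of
`U` form a basis, some translate `gU` contains `x` and is disjoint from `h(gU)`; conjugating, the
element `k = g⁻¹hg ∈ N` moves `U` off itself. Then `G_(U)` commutes elementwise with
`k G_(U) k⁻¹ = G_(kU)`, so for `a, b ∈ G_(U)` we get `⁅a, b⁆ = ⁅a, b k b⁻¹ k⁻¹⁆ ∈ N`.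
-/

/-- The subgroup of elements of `G` acting (via `φ`) trivially outside of `U`. -/
def fixingOutside {G X : Type*} [Group G] (φ : G →* Equiv.Perm X) (U : Set X) :
    Subgroup G where
  carrier := {g | ∀ x ∉ U, φ g x = x}
  one_mem' := by intro x _; simp
  mul_mem' := by
    intro a b ha hb x hx
    have h1 := hb x hx
    have h2 := ha x hx
    simp only [map_mul, Equiv.Perm.mul_apply, h1, h2]
  inv_mem' := by
    intro a ha x hx
    simp only [map_inv]
    exact Equiv.injective (φ a) (by rw [show (φ a) ((φ a)⁻¹ x) = x from (φ a).apply_symm_apply x, ha x hx])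

open scoped commutatorElement

namespace Subgroup

variable {G : Type*} [Group G]

theorem commutator_le_of_commute_conj {N H : Subgroup G} [N.Normal] {h : G} (hh : h ∈ N)
    (hcomm : ∀ a ∈ H, ∀ b ∈ H, Commute a (h * b * h⁻¹)) : ⁅H, H⁆ ≤ N := by
  rw [commutator_le]
  intro a ha b hb
  have hd : Commute a (h * b⁻¹ * h⁻¹) := hcomm a ha b⁻¹ (inv_mem hb)
  have hbd : b * (h * b⁻¹ * h⁻¹) ∈ N := by
    have : ⁅b, h⁆ ∈ N := commutator_le_right ⊤ N (commutator_mem_commutator (mem_top b) hh)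
    simpa only [commutatorElement_def, mul_assoc] using this
  have hab : ⁅a, b⁆ = ⁅a, b * (h * b⁻¹ * h⁻¹)⁆ := by
    rw [commutatorElement_mul_right_eq_mul_conj, commutatorElement_eq_one_iff_commute.2 hd,
      mul_one, mul_inv_cancel_right]
  rw [hab]
  exact commutator_le_right ⊤ N (commutator_mem_commutator (mem_top a) hbd)

end Subgroup

theorem TopologicalSpace.IsTopologicalBasis.exists_mem_disjoint_image {X : Type*}
    [TopologicalSpace X] [T2Space X] {B : Set (Set X)} (hB : IsTopologicalBasis B)
    {f : X → X} (hf : Continuous f) {x : X} (hx : f x ≠ x) :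
    ∃ W ∈ B, x ∈ W ∧ Disjoint W (f '' W) := by
  obtain ⟨u, v, hu, hv, hfxu, hxv, huv⟩ := t2_separation hx
  obtain ⟨W, hWB, hxW, hWV⟩ :=
    hB.exists_subset_of_mem_open (show x ∈ v ∩ f ⁻¹' u from ⟨hxv, hfxu⟩)
      (hv.inter (hu.preimage hf))
  refine ⟨W, hWB, hxW, Set.disjoint_left.2 ?_⟩
  rintro y hyW ⟨z, hzW, rfl⟩
  exact Set.disjoint_left.1 huv (hWV hzW).2 (hWV hyW).1

section fixingOutside

variable {G X : Type*} [Group G] {φ : G →* Equiv.Perm X}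

theorem conj_mem_fixingOutside_image {U : Set X} {a : G} (ha : a ∈ fixingOutside φ U) (g : G) :
    g * a * g⁻¹ ∈ fixingOutside φ (φ g '' U) := by
  intro x hx
  have hx' : (φ g).symm x ∉ U := fun hmem => hx ⟨_, hmem, (φ g).apply_symm_apply x⟩
  simp only [map_mul, map_inv, Equiv.Perm.mul_apply, Equiv.Perm.coe_inv, ha _ hx',
    Equiv.apply_symm_apply]

theorem commute_of_mem_fixingOutside_of_disjoint (hφ : Function.Injective φ) {V W : Set X}
    (hVW : Disjoint V W) {a b : G} (ha : a ∈ fixingOutside φ V) (hb : b ∈ fixingOutside φ W) :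
    Commute a b := by
  have hdisj : (φ a).Disjoint (φ b) := fun x =>
    (em (x ∈ V)).symm.imp (ha x) fun hxV => hb x (Set.disjoint_left.1 hVW hxV)
  exact hdisj.commute.of_map hφ

variable [TopologicalSpace X] [T2Space X]

theorem exists_disjoint_image_conj (hcont : ∀ g : G, Continuous (φ g)) {U : Set X}
    (hbasis : TopologicalSpace.IsTopologicalBasis {V : Set X | ∃ g : G, V = (φ g) '' U})
    {h : G} (hh : φ h ≠ 1) : ∃ g : G, Disjoint U (φ (g⁻¹ * h * g) '' U) := by
  obtain ⟨x, hx⟩ : ∃ x, φ h x ≠ x := by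
    by_contra! hfix
    exact hh (Equiv.ext hfix)
  obtain ⟨_, ⟨g, rfl⟩, -, hdisj⟩ := hbasis.exists_mem_disjoint_image (hcont h) hx
  refine ⟨g, ?_⟩
  rw [← Set.disjoint_image_iff (φ g).injective]
  have himage : φ g '' (φ (g⁻¹ * h * g) '' U) = φ h '' (φ g '' U) := by
    simp only [Set.image_image, map_mul, map_inv, Equiv.Perm.mul_apply, Equiv.Perm.coe_inv,
      Equiv.apply_symm_apply]
  rwa [himage]

end fixingOutside

theorem normalClosure_commutator_le_of_orbit_basis_general
    {G X : Type*} [Group G] [TopologicalSpace X] [T2Space X]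
    (φ : G →* Equiv.Perm X) (hfaithful : Function.Injective φ)
    (hcont : ∀ g : G, Continuous (φ g))
    (U : Set X)
    (hbasis : TopologicalSpace.IsTopologicalBasis {V : Set X | ∃ g : G, V = (φ g) '' U})
    (N : Subgroup G) [N.Normal] (hN : N ≠ ⊥) :
    Subgroup.normalClosure
      ((⁅fixingOutside φ U, fixingOutside φ U⁆ : Subgroup G) : Set G) ≤ N := by
  obtain ⟨h, hhN, hh⟩ := N.bot_or_exists_ne_one.resolve_left hN
  obtain ⟨g, hdisj⟩ :=
    exists_disjoint_image_conj hcont hbasis ((hfaithful.ne_iff' (map_one φ)).2 hh)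
  refine Subgroup.normalClosure_le_normal <|
    Subgroup.commutator_le_of_commute_conj (Subgroup.Normal.conj_mem' ‹_› h hhN g) ?_
  exact fun a ha b hb => commute_of_mem_fixingOutside_of_disjoint hfaithful hdisj ha
    (conj_mem_fixingOutside_image hb _)

/-- Lemma 4.3 (Lemma `lem:Ru`): if the `G`-orbit of an open set `U` is a basis of the
topology of `X`, then every non-trivial normal subgroup of `G` contains `R_U`, the normal
closure in `G` of the commutator subgroup of `G_(U)`. -/
theorem normalClosure_commutator_le_of_orbit_basis
    {G X : Type*} [Group G] [TopologicalSpace X] [T2Space X] [Infinite X]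
    (φ : G →* Equiv.Perm X) (hfaithful : Function.Injective φ)
    (hcont : ∀ g : G, Continuous (φ g))
    (U : Set X) (hU : IsOpen U)
    (hbasis : TopologicalSpace.IsTopologicalBasis {V : Set X | ∃ g : G, V = (φ g) '' U})
    (N : Subgroup G) [N.Normal] (hN : N ≠ ⊥) :
    Subgroup.normalClosure
      ((⁅fixingOutside φ U, fixingOutside φ U⁆ : Subgroup G) : Set G) ≤ N :=
  normalClosure_commutator_le_of_orbit_basis_general φ hfaithful hcont U hbasis N hN
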